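/- arXiv:2202.12164 — 4 statements merged into one kernel-verified Lean document; each statement's English description precedes it below -/
import Mathlib

section
/- For every n ≥ 1 and k > 0 there exists a polynomial Q on ℝⁿ such that for all partitions λ ∈ Λₙ⁺ one has 0 ≤ ∏_{i=1}^n ∏_{j=1}^{λ_i} (j − 1 + kn)/(λ_i − j + k) ≤ Q(λ). -/
lemma jack_aux (k : ℝ) (hk : 0 < k) (n d : ℕ)
    (hd1 : k * ((n : ℝ) - 1) ≤ d) (hd2 : (n : ℝ) ≤ d) :
    ∀ m : ℕ, ∏ j ∈ Finset.range m, ((j : ℝ) + k * n) / ((j : ℝ) + k)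
      ≤ ((m : ℝ) + 1) ^ d := by
  intro m
  induction m with
  | zero => simp
  | succ m ih =>
      rw [Finset.prod_range_succ]
      push_cast
      have hfac : ((m : ℝ) + k * n) / ((m : ℝ) + k)
          ≤ (((m : ℝ) + 2) / ((m : ℝ) + 1)) ^ d := by
        have hm0 : (0:ℝ) ≤ (m:ℝ) := Nat.cast_nonneg m
        have h1 : ((m : ℝ) + k * n) / ((m : ℝ) + k) ≤ 1 + d / ((m : ℝ) + 1) := by
          rw [show (1:ℝ) + d / ((m:ℝ)+1) = ((m:ℝ)+1+d)/((m:ℝ)+1) by field_simp]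
          rw [div_le_div_iff₀ (by linarith) (by linarith)]
          nlinarith [mul_nonneg (sub_nonneg.2 hd1) hm0,
            mul_le_mul_of_nonneg_left hd2 hk.le]
        have h2 : 1 + (d:ℝ) / ((m : ℝ) + 1) ≤ (1 + 1/((m:ℝ)+1)) ^ d := by
          have := one_add_mul_le_pow (a := 1/((m:ℝ)+1))
            (by have h0 : (0:ℝ) ≤ 1/((m:ℝ)+1) := by positivity
                linarith) d
          calc 1 + (d:ℝ) / ((m : ℝ) + 1) = 1 + d * (1/((m:ℝ)+1)) := by ring
            _ ≤ _ := this
        have h3 : (1 + 1/((m:ℝ)+1)) = ((m : ℝ) + 2) / ((m : ℝ) + 1) := by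
          field_simp; ring
        rw [h3] at h2
        linarith
      have hprodnn : (0:ℝ) ≤ ∏ j ∈ Finset.range m, ((j : ℝ) + k * n) / ((j : ℝ) + k) := by
        apply Finset.prod_nonneg; intro j _; positivity
      calc (∏ j ∈ Finset.range m, ((j : ℝ) + k * n) / ((j : ℝ) + k)) *
            (((m : ℝ) + k * n) / ((m : ℝ) + k))
          ≤ ((m : ℝ) + 1) ^ d * ((((m : ℝ) + 2) / ((m : ℝ) + 1)) ^ d) := by
            apply mul_le_mul ih hfac (by positivity) (by positivity)
        _ = ((m : ℝ) + 2) ^ d := by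
            rw [div_pow, mul_div_cancel₀]
            positivity
        _ = ((m : ℝ) + 1 + 1) ^ d := by ring
  
lemma jack_inner_eq (k : ℝ) (hk : 0 < k) (n m : ℕ) :
    ∏ j ∈ Finset.range m, ((j : ℝ) + k * n) / ((m : ℝ) - ((j : ℝ) + 1) + k)
      = ∏ j ∈ Finset.range m, ((j : ℝ) + k * n) / ((j : ℝ) + k) := by
  rw [Finset.prod_div_distrib, Finset.prod_div_distrib]
  congr 1
  rw [← Finset.prod_range_reflect (fun j => (j : ℝ) + k) m]
  apply Finset.prod_congr rfl
  intro j hj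
  have hj' := Finset.mem_range.1 hj
  have h : (m - 1 - j : ℕ) = m - (j+1) := by omega
  rw [h, Nat.cast_sub (by omega)]
  push_cast
  ring

/-- For `n ≥ 1` and `k > 0` there is a polynomial `Q` on `ℝⁿ` dominating, over all
partitions `λ`, the product `∏ᵢ ∏_{j=1}^{λᵢ} (j − 1 + kn)/(λᵢ − j + k)` (here written
with 0-based `j`), which is also nonnegative. -/
theorem jack_P_one_poly_bound (n : ℕ) (k : ℝ) (hk : 0 < k) :
    ∃ Q : MvPolynomial (Fin n) ℝ,
      ∀ lam : Fin n → ℕ, (∀ i j : Fin n, i ≤ j → lam j ≤ lam i) →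
        0 ≤ (∏ i, ∏ j ∈ Finset.range (lam i),
              ((j : ℝ) + k * n) / ((lam i : ℝ) - ((j : ℝ) + 1) + k)) ∧
        (∏ i, ∏ j ∈ Finset.range (lam i),
              ((j : ℝ) + k * n) / ((lam i : ℝ) - ((j : ℝ) + 1) + k))
          ≤ MvPolynomial.eval (fun i => (lam i : ℝ)) Q := by
  set d : ℕ := max (⌈k * ((n : ℝ) - 1)⌉₊) n with hd
  have hd1 : k * ((n : ℝ) - 1) ≤ d := by
    calc k * ((n : ℝ) - 1) ≤ (⌈k * ((n : ℝ) - 1)⌉₊ : ℝ) := Nat.le_ceil _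
      _ ≤ d := Nat.cast_le.2 (le_max_left _ _)
  have hd2 : (n : ℝ) ≤ d := Nat.cast_le.2 (le_max_right _ _)
  refine ⟨∏ i : Fin n, (MvPolynomial.X i + 1) ^ d, fun lam _ => ?_⟩
  have hinner_nn : ∀ i : Fin n, (0:ℝ) ≤ ∏ j ∈ Finset.range (lam i),
      ((j : ℝ) + k * n) / ((lam i : ℝ) - ((j : ℝ) + 1) + k) := by
    intro i
    apply Finset.prod_nonneg
    intro j hj
    have hj' := Finset.mem_range.1 hj
    have hden : (0:ℝ) < (lam i : ℝ) - ((j : ℝ) + 1) + k := by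
      have : ((j:ℝ) + 1) ≤ (lam i : ℝ) := by exact_mod_cast Nat.succ_le_of_lt hj'
      linarith
    positivity
  constructor
  · exact Finset.prod_nonneg fun i _ => hinner_nn i
  · have hev : MvPolynomial.eval (fun i => (lam i : ℝ))
        (∏ i : Fin n, (MvPolynomial.X i + 1) ^ d)
        = ∏ i : Fin n, ((lam i : ℝ) + 1) ^ d := by
      simp
    rw [hev]
    apply Finset.prod_le_prod (fun i _ => hinner_nn i)
    intro i _
    rw [jack_inner_eq k hk n (lam i)]
    exact jack_aux k hk n d hd1 hd2 (lam i)
end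

section
/- Suppose f : (0,∞)ⁿ → ℂ is measurable and |f(x)| ≤ C·exp(s·‖x‖₁) for constants C > 0, s ∈ ℝ, where ‖x‖₁ = Σᵢ xᵢ. Suppose further that the kernel E : ℂⁿ × (0,∞)ⁿ → ℂ is continuous, holomorphic in the first variable, and satisfies |E(−z, x)| ≤ exp(−‖x‖₁ · minᵢ aᵢ) whenever Re z ≥ a componentwise for a ∈ ℝⁿ. Then the Laplace-type integral 𝓛f(z) = ∫_{(0,∞)ⁿ} f(x) E(−z, x) ω(x) dx, with weight ω(x) = ∏_{i<j} |xᵢ − xⱼ|^{2k} (k ≥ 0), converges absolutely and defines a holomorphic function on {z ∈ ℂⁿ : Re zᵢ > s for all i}. -/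
open MeasureTheory

/-- The type `A` Dunkl weight `ω(x) = ∏_{i<j} |xᵢ − xⱼ|^{2k}`. -/
noncomputable def dunklWeight (n : ℕ) (k : ℝ) (x : Fin n → ℝ) : ℝ :=
  ∏ p ∈ Finset.univ.filter (fun p : Fin n × Fin n => p.1 < p.2), |x p.1 - x p.2| ^ (2 * k)


open Metric Set Filter Topology

lemma dunklWeight_nonneg (n : ℕ) (k : ℝ) (x : Fin n → ℝ) : 0 ≤ dunklWeight n k x :=
  Finset.prod_nonneg fun p _ => Real.rpow_nonneg (abs_nonneg _) _

lemma measurable_dunklWeight (n : ℕ) (k : ℝ) : Measurable (dunklWeight n k) :=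
  Finset.measurable_prod _ fun p _ =>
    ((measurable_pi_apply p.1).sub (measurable_pi_apply p.2)).abs.pow measurable_const

lemma measurableSet_orthant (n : ℕ) : MeasurableSet {x : Fin n → ℝ | ∀ i, 0 < x i} := by
  have h : {x : Fin n → ℝ | ∀ i, 0 < x i} = Set.pi Set.univ fun _ => Set.Ioi (0:ℝ) := by
    ext x; simp
  rw [h]
  exact MeasurableSet.univ_pi fun i => measurableSet_Ioi

lemma rpow_le_mul_exp {K c : ℝ} (hK : 0 ≤ K) (hc : 0 < c) :
    ∃ D : ℝ, 0 < D ∧ ∀ t : ℝ, 0 ≤ t → t ^ K ≤ D * Real.exp (c * t) := by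
  rcases hK.eq_or_lt with h0 | hKpos
  · exact ⟨1, one_pos, fun t ht => by
      rw [← h0, Real.rpow_zero, one_mul]
      exact Real.one_le_exp (by positivity)⟩
  · refine ⟨(K / c) ^ K, Real.rpow_pos_of_pos (by positivity) _, fun t ht => ?_⟩
    have hu : c * t / K ≤ Real.exp (c * t / K) := by
      have := Real.add_one_le_exp (c * t / K); linarith
    have h1 : t ≤ Real.exp (c * t / K) * (K / c) := by
      calc t = c * t / K * (K / c) := by field_simp
        _ ≤ Real.exp (c * t / K) * (K / c) :=
            mul_le_mul_of_nonneg_right hu (by positivity)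
    calc t ^ K ≤ (Real.exp (c * t / K) * (K / c)) ^ K := Real.rpow_le_rpow ht h1 hK
      _ = Real.exp (c * t / K) ^ K * (K / c) ^ K :=
          Real.mul_rpow (Real.exp_pos _).le (by positivity)
      _ = Real.exp (c * t) * (K / c) ^ K := by
          rw [← Real.exp_mul, div_mul_cancel₀ _ hKpos.ne']
      _ = (K / c) ^ K * Real.exp (c * t) := mul_comm _ _

lemma integrableOn_exp_mul_dunklWeight (n : ℕ) (k : ℝ) (hk : 0 ≤ k) {c : ℝ} (hc : 0 < c) :
    IntegrableOn (fun x : Fin n → ℝ => Real.exp (-c * ∑ i, x i) * dunklWeight n k x)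
      {x : Fin n → ℝ | ∀ i, 0 < x i} := by
  set N := (Finset.univ.filter fun p : Fin n × Fin n => p.1 < p.2).card with hN
  obtain ⟨D, hD, hDle⟩ := rpow_le_mul_exp (K := 2 * k * N) (by positivity) (half_pos hc)
  set g : ℝ → ℝ := Set.indicator (Set.Ioi 0) (fun t => Real.exp (-(c / 2) * t)) with hg
  have hgint : Integrable g := by
    rw [hg, integrable_indicator_iff measurableSet_Ioi]
    exact exp_neg_integrableOn_Ioi 0 (half_pos hc)
  have hGint : Integrable fun x : Fin n → ℝ => D * ∏ i, g (x i) :=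
    (Integrable.fintype_prod fun _ : Fin n => hgint).const_mul D
  have hsum_meas : Measurable fun x : Fin n → ℝ => ∑ i, x i :=
    Finset.measurable_sum _ fun i _ => measurable_pi_apply i
  refine Integrable.mono' hGint.integrableOn ?_ ?_
  · exact ((Real.measurable_exp.comp (measurable_const.mul hsum_meas)).mul
      (measurable_dunklWeight n k)).aestronglyMeasurable
  · filter_upwards [ae_restrict_mem (measurableSet_orthant n)] with x hx
    have hx' : ∀ i, 0 < x i := hx
    have hsum : (0:ℝ) ≤ ∑ i, x i := Finset.sum_nonneg fun i _ => (hx' i).le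
    have hω0 := dunklWeight_nonneg n k x
    have hprod : ∏ i, g (x i) = Real.exp (-(c / 2) * ∑ i, x i) := by
      have hgi : ∀ i : Fin n, g (x i) = Real.exp (-(c/2) * x i) := fun i =>
        Set.indicator_of_mem (hx' i) _
      rw [Finset.prod_congr rfl fun i _ => hgi i, ← Real.exp_sum]
      congr 1
      rw [← Finset.mul_sum]
    have hωle : dunklWeight n k x ≤ (∑ i, x i) ^ (2 * k * N) := by
      have h1 : dunklWeight n k x ≤
          ∏ _p ∈ Finset.univ.filter (fun p : Fin n × Fin n => p.1 < p.2),
            (∑ i, x i) ^ (2 * k) := by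
        apply Finset.prod_le_prod (fun p _ => Real.rpow_nonneg (abs_nonneg _) _)
        intro p hp
        apply Real.rpow_le_rpow (abs_nonneg _) ?_ (by positivity)
        have hne : p.1 ≠ p.2 := ne_of_lt (Finset.mem_filter.mp hp).2
        have hle : x p.1 + x p.2 ≤ ∑ i, x i := by
          have h2 : ∑ i ∈ ({p.1, p.2} : Finset (Fin n)), x i ≤ ∑ i, x i :=
            Finset.sum_le_sum_of_subset_of_nonneg (Finset.subset_univ _)
              (fun i _ _ => (hx' i).le)
          rwa [Finset.sum_pair hne] at h2
        have habs : |x p.1 - x p.2| ≤ x p.1 + x p.2 :=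
          abs_le.mpr ⟨by linarith [(hx' p.1).le, (hx' p.2).le],
            by linarith [(hx' p.1).le, (hx' p.2).le]⟩
        linarith
      rw [Finset.prod_const] at h1
      calc dunklWeight n k x ≤ ((∑ i, x i) ^ (2*k)) ^ N := h1
        _ = (∑ i, x i) ^ (2 * k * N) := by
            rw [← Real.rpow_natCast ((∑ i, x i) ^ (2*k)) N, ← Real.rpow_mul hsum]
    rw [Real.norm_eq_abs, abs_of_nonneg (mul_nonneg (Real.exp_pos _).le hω0), hprod]
    calc Real.exp (-c * ∑ i, x i) * dunklWeight n k x
        ≤ Real.exp (-c * ∑ i, x i) * ((∑ i, x i) ^ (2*k*(N:ℝ))) :=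
          mul_le_mul_of_nonneg_left hωle (Real.exp_pos _).le
      _ ≤ Real.exp (-c * ∑ i, x i) * (D * Real.exp (c/2 * ∑ i, x i)) :=
          mul_le_mul_of_nonneg_left (hDle _ hsum) (Real.exp_pos _).le
      _ = D * (Real.exp (-c * ∑ i, x i) * Real.exp (c/2 * ∑ i, x i)) := by ring
      _ = D * Real.exp (-(c/2) * ∑ i, x i) := by
          rw [← Real.exp_add]; congr 1; ring

lemma pi_single_sum {n : ℕ} (v : Fin n → ℂ) :
    ∑ i, v i • (Pi.single i (1:ℂ) : Fin n → ℂ) = v := by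
  ext j
  rw [Finset.sum_apply]
  simp [Pi.single_apply]

lemma clm_eq_sum {n : ℕ} (L : (Fin n → ℂ) →L[ℂ] ℂ) :
    L = ∑ i, L (Pi.single i 1) • (ContinuousLinearMap.proj i : (Fin n → ℂ) →L[ℂ] ℂ) := by
  apply ContinuousLinearMap.ext
  intro v
  rw [ContinuousLinearMap.sum_apply]
  simp only [ContinuousLinearMap.smul_apply, ContinuousLinearMap.proj_apply, smul_eq_mul]
  conv_lhs => rw [← pi_single_sum v]
  rw [map_sum]
  simp_rw [_root_.map_smul, smul_eq_mul]
  exact Finset.sum_congr rfl fun i _ => mul_comm _ _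

lemma fderiv_opNorm_le {n : ℕ} {g : (Fin n → ℂ) → ℂ} (hg : ∀ w, DifferentiableAt ℂ g w)
    (z : Fin n → ℂ) {r M : ℝ} (hr : 0 < r) (hM : 0 < M)
    (hb : ∀ w : Fin n → ℂ, (∀ i, ‖w i - z i‖ < r) → ‖g w‖ ≤ M) :
    ‖fderiv ℂ g z‖ ≤ n * (3 * M) / r := by
  have key : ∀ i : Fin n, ‖fderiv ℂ g z (Pi.single i 1)‖ ≤ 3 * M / r := by
    intro i
    have hdh : HasDerivAt (fun w : ℂ => g (Function.update z i w))
        (fderiv ℂ g z (Pi.single i 1)) (z i) := by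
      have hg' : HasFDerivAt g (fderiv ℂ g z) (Function.update z i (z i)) := by
        rw [Function.update_eq_self]; exact (hg z).hasFDerivAt
      exact hg'.comp_hasDerivAt (z i)
        (hasDerivAt_update z i (z i) : HasDerivAt (fun w => Function.update z i w) _ _)
    set h : ℂ → ℂ := fun w => g (Function.update z i w) with hh
    have hdiff : DifferentiableOn ℂ h (ball (z i) r) := by
      intro w _
      exact (((hg _).hasFDerivAt.comp_hasDerivAt w
        (hasDerivAt_update z i w :
          HasDerivAt (fun w => Function.update z i w) _ _)).differentiableAt).differentiableWithinAt
    have hmaps : MapsTo h (ball (z i) r) (ball (h (z i)) (3 * M)) := by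
      have hin : ∀ w : ℂ, ‖w - z i‖ < r → ‖h w‖ ≤ M := by
        intro w hw
        apply hb
        intro j
        by_cases hj : j = i
        · subst hj; simpa using hw
        · simpa [Function.update_of_ne hj] using hr
      intro w hw
      have hbw : ‖h w‖ ≤ M := hin w (by rw [mem_ball, dist_eq_norm] at hw; exact hw)
      have hbz : ‖h (z i)‖ ≤ M := hin (z i) (by simpa using hr)
      rw [mem_ball, dist_eq_norm]
      calc ‖h w - h (z i)‖ ≤ ‖h w‖ + ‖h (z i)‖ := norm_sub_le _ _
        _ ≤ M + M := add_le_add hbw hbz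
        _ < 3 * M := by linarith
    have hkey := Complex.norm_deriv_le_div_of_mapsTo_ball hdiff (hmaps.mono_right ball_subset_closedBall) hr
    rwa [hdh.deriv] at hkey
  refine (fderiv ℂ g z).opNorm_le_bound (by positivity) fun v => ?_
  calc ‖fderiv ℂ g z v‖ = ‖∑ i, v i • fderiv ℂ g z (Pi.single i 1)‖ := by
        conv_lhs => rw [← pi_single_sum v]
        rw [map_sum]
        simp_rw [_root_.map_smul]
    _ ≤ ∑ i : Fin n, ‖v i • fderiv ℂ g z (Pi.single i 1)‖ := norm_sum_le _ _
    _ ≤ ∑ _i : Fin n, ‖v‖ * (3 * M / r) := by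
        apply Finset.sum_le_sum
        intro i _
        rw [norm_smul]
        exact mul_le_mul (norm_le_pi_norm v i) (key i) (norm_nonneg _) (norm_nonneg _)
    _ = n * (3 * M) / r * ‖v‖ := by
        rw [Finset.sum_const, Finset.card_univ, Fintype.card_fin, nsmul_eq_mul]
        ring

set_option maxHeartbeats 1000000 in
/-- Convergence and holomorphy of the Dunkl–Laplace transform: if `f` is measurable and
exponentially bounded by `C e^{s‖x‖₁}` on the positive orthant, and the kernel `E` is
continuous, holomorphic in the first variable, and satisfies the exponential bound
`|E(−z,x)| ≤ exp(−‖x‖₁ · m)` whenever `Re zᵢ ≥ m` for all `i`, then the Laplace integral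
converges absolutely and is holomorphic on `{z : Re zᵢ > s}`. -/
theorem dunkl_laplace_holomorphic (n : ℕ) (k : ℝ) (hk : 0 ≤ k)
    (f : (Fin n → ℝ) → ℂ) (hf : Measurable f) (C s : ℝ) (hC : 0 < C)
    (hfb : ∀ x : Fin n → ℝ, (∀ i, 0 < x i) →
      ‖f x‖ ≤ C * Real.exp (s * ∑ i, x i))
    (E : (Fin n → ℂ) → (Fin n → ℝ) → ℂ)
    (hEcont : Continuous fun p : (Fin n → ℂ) × (Fin n → ℝ) => E p.1 p.2)
    (hEhol : ∀ x : Fin n → ℝ, (∀ i, 0 < x i) →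
      ∀ z : Fin n → ℂ, DifferentiableAt ℂ (fun w => E w x) z)
    (hEbound : ∀ (m : ℝ) (z : Fin n → ℂ), (∀ i, m ≤ (z i).re) →
      ∀ x : Fin n → ℝ, (∀ i, 0 < x i) →
        ‖E (-z) x‖ ≤ Real.exp (-(∑ i, x i) * m)) :
    (∀ z : Fin n → ℂ, (∀ i, s < (z i).re) →
      IntegrableOn (fun x => f x * E (-z) x * (dunklWeight n k x : ℂ))
        {x : Fin n → ℝ | ∀ i, 0 < x i}) ∧
    DifferentiableOn ℂ
      (fun z : Fin n → ℂ => ∫ x in {x : Fin n → ℝ | ∀ i, 0 < x i},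
        f x * E (-z) x * (dunklWeight n k x : ℂ))
      {z : Fin n → ℂ | ∀ i, s < (z i).re} := by
  have hSmeas := measurableSet_orthant n
  have hω := measurable_dunklWeight n k
  set S := {x : Fin n → ℝ | ∀ i, 0 < x i} with hS
  have hmeas : ∀ z : Fin n → ℂ, AEStronglyMeasurable
      (fun x => f x * E (-z) x * (dunklWeight n k x : ℂ)) (volume.restrict S) := by
    intro z
    have hEz : Continuous fun x : Fin n → ℝ => E (-z) x :=
      hEcont.comp (continuous_const.prodMk continuous_id)
    exact ((hf.mul hEz.measurable).mul
      (Complex.measurable_ofReal.comp hω)).aestronglyMeasurable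
  have key : ∀ m : ℝ, s < m → ∀ z : Fin n → ℂ, (∀ i, m ≤ (z i).re) →
      IntegrableOn (fun x => f x * E (-z) x * (dunklWeight n k x : ℂ)) S := by
    intro m hm z hz
    have hint : Integrable (fun x : Fin n → ℝ =>
        C * (Real.exp (-(m - s) * ∑ i, x i) * dunklWeight n k x)) (volume.restrict S) :=
      (integrableOn_exp_mul_dunklWeight n k hk (by linarith)).const_mul C
    refine Integrable.mono' hint (hmeas z) ?_
    filter_upwards [ae_restrict_mem hSmeas] with x hx
    have hx' : ∀ i, 0 < x i := hx
    have h1 := hfb x hx'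
    have h2 := hEbound m z hz x hx'
    have hω0 := dunklWeight_nonneg n k x
    have hωn : ‖((dunklWeight n k x : ℝ) : ℂ)‖ = dunklWeight n k x := by
      rw [Complex.norm_real, Real.norm_eq_abs, abs_of_nonneg hω0]
    rw [norm_mul, norm_mul, hωn]
    calc ‖f x‖ * ‖E (-z) x‖ * dunklWeight n k x
        ≤ (C * Real.exp (s * ∑ i, x i)) * Real.exp (-(∑ i, x i) * m)
            * dunklWeight n k x := by
          apply mul_le_mul_of_nonneg_right _ hω0
          apply mul_le_mul _ _ (norm_nonneg _) (by positivity)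
          · assumption
          · assumption
      _ = C * (Real.exp (-(m - s) * ∑ i, x i) * dunklWeight n k x) := by
          rw [show Real.exp (-(m-s) * ∑ i, x i)
            = Real.exp (s * ∑ i, x i) * Real.exp (-(∑ i, x i) * m) by
            rw [← Real.exp_add]; congr 1; ring]
          ring
  have getm : ∀ z : Fin n → ℂ, (∀ i, s < (z i).re) → ∃ m, s < m ∧ ∀ i, m ≤ (z i).re := by
    intro z hz
    rcases isEmpty_or_nonempty (Fin n) with h | h
    · exact ⟨s + 1, by linarith, fun i => isEmptyElim i⟩
    · refine ⟨Finset.univ.inf' Finset.univ_nonempty fun i => (z i).re, ?_, fun i =>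
        Finset.inf'_le _ (Finset.mem_univ i)⟩
      rw [Finset.lt_inf'_iff]
      exact fun i _ => hz i
  constructor
  · intro z hz
    obtain ⟨m, hm1, hm2⟩ := getm z hz
    exact key m hm1 z hm2
  · intro z₀ hz₀
    obtain ⟨m, hm1, hm2⟩ := getm z₀ hz₀
    set q : ℝ := (m - s) / 3 with hq
    have hqpos : 0 < q := by rw [hq]; linarith
    set m' : ℝ := s + q with hm'
    have hgx : ∀ x : Fin n → ℝ, (∀ i, 0 < x i) →
        ∀ z : Fin n → ℂ, DifferentiableAt ℂ (fun w => E (-w) x) z := by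
      intro x hx z
      have h1 : DifferentiableAt ℂ (fun w : Fin n → ℂ => -w) z :=
        differentiable_id.neg.differentiableAt
      exact ((hEhol x hx (-z)).comp z h1 : _)
    set F' : (Fin n → ℂ) → (Fin n → ℝ) → ((Fin n → ℂ) →L[ℂ] ℂ) := fun z x =>
      (f x * (dunklWeight n k x : ℂ)) • fderiv ℂ (fun w => E (-w) x) z with hF'
    have hwre : ∀ z ∈ ball z₀ q, ∀ w : Fin n → ℂ, (∀ i, ‖w i - z i‖ < q) →
        ∀ i, m' ≤ (w i).re := by
      intro z hz w hw i
      have h1 : ‖z i - z₀ i‖ ≤ dist z z₀ := by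
        rw [← dist_eq_norm]; exact dist_le_pi_dist z z₀ i
      have h2 : dist z z₀ < q := mem_ball.mp hz
      have h3 : |(z i - z₀ i).re| ≤ ‖z i - z₀ i‖ := by
        exact Complex.abs_re_le_norm _
      have h4 : |(w i - z i).re| ≤ ‖w i - z i‖ := by
        exact Complex.abs_re_le_norm _
      have h5 : m ≤ (z₀ i).re := hm2 i
      have e1 : (z i - z₀ i).re = (z i).re - (z₀ i).re := Complex.sub_re _ _
      have e2 : (w i - z i).re = (w i).re - (z i).re := Complex.sub_re _ _
      have h6 := hw i
      rw [abs_le] at h3 h4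
      have hq3 : q = (m - s) / 3 := hq
      have hm'2 : m' = s + q := hm'
      linarith [h3.1, h4.1]
    -- integrable bound for the derivative
    have hbound_int : Integrable (fun x : Fin n → ℝ =>
        (C * (↑n * 3 / q)) * (Real.exp (-q * ∑ i, x i) * dunklWeight n k x))
        (volume.restrict S) :=
      (integrableOn_exp_mul_dunklWeight n k hk hqpos).const_mul _
    -- measurability of F' z₀
    have hF'meas : AEStronglyMeasurable (F' z₀) (volume.restrict S) := by
      have hnorm : ∀ m : ℕ, ‖((m:ℂ)+1)‖ = (m:ℝ)+1 := by
        intro m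
        rw [show ((m:ℂ)+1) = ((m+1:ℕ):ℂ) by push_cast; ring, Complex.norm_natCast]
        push_cast; ring
      have hc : Tendsto (fun m : ℕ => ‖((m:ℂ)+1)‖) atTop atTop := by
        simp_rw [hnorm]
        exact tendsto_atTop_add_const_right _ 1 tendsto_natCast_atTop_atTop
      set Φ : ℕ → (Fin n → ℝ) → ((Fin n → ℂ) →L[ℂ] ℂ) := fun m x =>
        ∑ i, (((m:ℂ)+1) • (E (-(z₀ + ((m:ℂ)+1)⁻¹ • (Pi.single i 1 : Fin n → ℂ))) x
            - E (-z₀) x)) •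
          (ContinuousLinearMap.proj i : (Fin n → ℂ) →L[ℂ] ℂ) with hΦ
      have hΦmeas : ∀ m, AEStronglyMeasurable (Φ m) (volume.restrict S) := by
        intro m
        apply Continuous.aestronglyMeasurable
        apply continuous_finset_sum
        intro i _
        refine Continuous.smul (f := fun a : Fin n → ℝ => ((m:ℂ)+1) • (E (-(z₀ + ((m:ℂ)+1)⁻¹ • (Pi.single i 1 : Fin n → ℂ))) a - E (-z₀) a)) ?_ (continuous_const : Continuous fun _ : Fin n → ℝ => (ContinuousLinearMap.proj i : (Fin n → ℂ) →L[ℂ] ℂ))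
        refine Continuous.const_smul (g := fun a : Fin n → ℝ => E (-(z₀ + ((m:ℂ)+1)⁻¹ • (Pi.single i 1 : Fin n → ℂ))) a - E (-z₀) a) ?_ ((m:ℂ)+1)
        exact (hEcont.comp (continuous_const.prodMk continuous_id)).sub
          (hEcont.comp (continuous_const.prodMk continuous_id))
      have hΦlim : ∀ᵐ x ∂(volume.restrict S), Tendsto (fun m => Φ m x) atTop
          (𝓝 (fderiv ℂ (fun w => E (-w) x) z₀)) := by
        filter_upwards [ae_restrict_mem hSmeas] with x hx
        rw [clm_eq_sum (fderiv ℂ (fun w => E (-w) x) z₀)]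
        apply tendsto_finset_sum
        intro i _
        refine Tendsto.smul ?_ tendsto_const_nhds
        exact ((hgx x hx z₀).hasFDerivAt).lim (Pi.single i 1) hc
      have hLmeas : AEStronglyMeasurable (fun x => fderiv ℂ (fun w => E (-w) x) z₀)
          (volume.restrict S) := aestronglyMeasurable_of_tendsto_ae atTop hΦmeas hΦlim
      have hsm : AEStronglyMeasurable (fun x => (f x * (dunklWeight n k x : ℂ)) •
          fderiv ℂ (fun w => E (-w) x) z₀) (volume.restrict S) :=
        ((hf.mul (Complex.measurable_ofReal.comp hω)).aestronglyMeasurable).smul hLmeas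
      simpa only [hF'] using hsm
    -- the bound
    have h_bound : ∀ᵐ x ∂(volume.restrict S), ∀ z ∈ ball z₀ q,
        ‖F' z x‖ ≤ (C * (↑n * 3 / q)) * (Real.exp (-q * ∑ i, x i) * dunklWeight n k x) := by
      filter_upwards [ae_restrict_mem hSmeas] with x hx
      intro z hz
      have hx' : ∀ i, 0 < x i := hx
      have hω0 := dunklWeight_nonneg n k x
      have hfd : ‖fderiv ℂ (fun w => E (-w) x) z‖
          ≤ ↑n * (3 * Real.exp (-(∑ i, x i) * m')) / q := by
        apply fderiv_opNorm_le (hgx x hx') z hqpos (Real.exp_pos _)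
        intro w hw
        exact hEbound m' w (hwre z hz w hw) x hx'
      have h1 : ‖f x * ((dunklWeight n k x : ℝ) : ℂ)‖
          ≤ C * Real.exp (s * ∑ i, x i) * dunklWeight n k x := by
        rw [norm_mul, Complex.norm_real, Real.norm_eq_abs, abs_of_nonneg hω0]
        apply mul_le_mul_of_nonneg_right _ hω0
        exact hfb x hx'
      have hexp : Real.exp (s * ∑ i, x i) * Real.exp (-(∑ i, x i) * m')
          = Real.exp (-q * ∑ i, x i) := by
        rw [← Real.exp_add, hm']; congr 1; ring
      calc ‖F' z x‖ = ‖f x * ((dunklWeight n k x : ℝ) : ℂ)‖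
            * ‖fderiv ℂ (fun w => E (-w) x) z‖ := by
            simp only [hF']
            exact norm_smul (f x * ((dunklWeight n k x : ℝ) : ℂ))
              (fderiv ℂ (fun w => E (-w) x) z)
        _ ≤ (C * Real.exp (s * ∑ i, x i) * dunklWeight n k x)
            * (↑n * (3 * Real.exp (-(∑ i, x i) * m')) / q) :=
            mul_le_mul h1 hfd (norm_nonneg _) (by positivity)
        _ = (C * (↑n * 3 / q)) * ((Real.exp (s * ∑ i, x i)
            * Real.exp (-(∑ i, x i) * m')) * dunklWeight n k x) := by ring
        _ = (C * (↑n * 3 / q)) * (Real.exp (-q * ∑ i, x i) * dunklWeight n k x) := by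
            rw [hexp]
    -- differentiability
    have h_diff : ∀ᵐ x ∂(volume.restrict S), ∀ z ∈ ball z₀ q,
        HasFDerivAt (fun z : Fin n → ℂ => f x * E (-z) x * (dunklWeight n k x : ℂ))
          (F' z x) z := by
      filter_upwards [ae_restrict_mem hSmeas] with x hx
      intro z _
      have hx' : ∀ i, 0 < x i := hx
      have hd := ((hgx x hx' z).hasFDerivAt).const_smul (f x * (dunklWeight n k x : ℂ))
      have heq : (fun z : Fin n → ℂ => f x * E (-z) x * (dunklWeight n k x : ℂ))
          = fun z : Fin n → ℂ => (f x * (dunklWeight n k x : ℂ)) • E (-z) x := by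
        funext z; simp only [smul_eq_mul]; ring
      rw [heq]
      simp only [hF']
      exact hd
    have hF_int : Integrable (fun x => f x * E (-z₀) x * (dunklWeight n k x : ℂ))
        (volume.restrict S) := key m hm1 z₀ hm2
    have hmain : HasFDerivAt
        (fun z : Fin n → ℂ => ∫ x, f x * E (-z) x * (dunklWeight n k x : ℂ)
          ∂(volume.restrict S))
        (∫ x, F' z₀ x ∂(volume.restrict S)) z₀ :=
      hasFDerivAt_integral_of_dominated_of_fderiv_le (ball_mem_nhds z₀ hqpos)
        (Filter.Eventually.of_forall fun z => hmeas z) hF_int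
        hF'meas h_bound hbound_int h_diff
    exact hmain.differentiableAt.differentiableWithinAt
end

section
/- Classical Post–Widder inversion formula: let f : (0,∞) → ℂ be measurable and bounded, continuous at ξ > 0, and let Lf(z) = ∫₀^∞ f(x) e^{−zx} dx be its Laplace transform. Then f(ξ) = lim_{ν→∞} ((−1)^ν / ν!) · (ν/ξ)^{ν+1} · (Lf)^{(ν)}(ν/ξ), where (Lf)^{(ν)} denotes the ν-th derivative. -/
open MeasureTheory
open Set Real Filter Metric


lemma kernel_integrable (k : ℕ) {b : ℝ} (hb : 0 < b) :
    IntegrableOn (fun x : ℝ => x ^ k * Real.exp (-b * x)) (Ioi 0) := by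
  have h := integrableOn_rpow_mul_exp_neg_mul_rpow (s := (k : ℝ)) (p := 1)
    (by exact_mod_cast neg_one_lt_zero.trans_le (Nat.cast_nonneg k)) one_pos hb
  simp only [Real.rpow_one] at h
  refine h.congr_fun (fun x hx => ?_) measurableSet_Ioi
  simp only [Real.rpow_natCast]

lemma kernel_moment (k : ℕ) {b : ℝ} (hb : 0 < b) :
    ∫ x in Ioi (0:ℝ), x ^ k * Real.exp (-b * x) = (k.factorial : ℝ) / b ^ (k + 1) := by
  have h := Real.integral_rpow_mul_exp_neg_mul_Ioi (a := (k : ℝ) + 1) (r := b)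
    (by positivity) hb
  rw [show ((k:ℝ) + 1 - 1) = (k:ℝ) by ring] at h
  rw [show ∫ x in Ioi (0:ℝ), x ^ k * Real.exp (-b * x)
      = ∫ t in Ioi (0:ℝ), t ^ (k:ℝ) * Real.exp (-(b * t)) from
    setIntegral_congr_fun measurableSet_Ioi (fun x hx => by
      rw [Real.rpow_natCast, neg_mul]), h]
  rw [show ((k:ℝ) + 1) = ((k+1 : ℕ) : ℝ) by push_cast; ring, Real.rpow_natCast]
  rw [show ((k+1:ℕ):ℝ) = (k:ℝ)+1 by push_cast; ring, Real.Gamma_nat_eq_factorial]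
  rw [div_pow, one_pow]
  ring

lemma norm_integrand (f : ℝ → ℂ) (ν : ℕ) (z : ℂ) {x : ℝ} (hx : 0 < x) :
    ‖f x * (-(x:ℂ)) ^ ν * Complex.exp (-z * x)‖
      = ‖f x‖ * (x ^ ν * Real.exp (-z.re * x)) := by
  rw [norm_mul, norm_mul, norm_pow, norm_neg]
  simp only [Complex.norm_exp, Complex.norm_real, Real.norm_eq_abs]
  rw [abs_of_pos hx]
  rw [show (-z * (x:ℂ)).re = -z.re * x by simp [Complex.mul_re]]
  ring

lemma F_integrableOn (f : ℝ → ℂ) (hfm : Measurable f) (M : ℝ)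
    (hfb : ∀ x : ℝ, 0 < x → ‖f x‖ ≤ M) (ν : ℕ) {z : ℂ} (hz : 0 < z.re) :
    IntegrableOn (fun x : ℝ => f x * (-(x:ℂ)) ^ ν * Complex.exp (-z * x)) (Ioi 0) := by
  refine Integrable.mono' (((kernel_integrable ν hz).const_mul M)) ?_ ?_
  · exact (Measurable.aestronglyMeasurable (by fun_prop))
  · filter_upwards [ae_restrict_mem measurableSet_Ioi] with x hx
    rw [norm_integrand f ν z hx]
    have hx' := (show (0:ℝ) < x from hx).le
    have : (0:ℝ) ≤ x ^ ν * Real.exp (-z.re * x) := by positivity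
    exact mul_le_mul_of_nonneg_right (hfb x hx) this

lemma F_hasDerivAt (f : ℝ → ℂ) (hfm : Measurable f) (M : ℝ)
    (hfb : ∀ x : ℝ, 0 < x → ‖f x‖ ≤ M) (ν : ℕ) {z : ℂ} (hz : 0 < z.re) :
    HasDerivAt (fun w : ℂ => ∫ x in Ioi (0:ℝ), f x * (-(x:ℂ)) ^ ν * Complex.exp (-w * x))
      (∫ x in Ioi (0:ℝ), f x * (-(x:ℂ)) ^ (ν+1) * Complex.exp (-z * x)) z := by
  have hM : 0 ≤ M := (norm_nonneg _).trans (hfb 1 one_pos)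
  set ε := z.re / 2 with hε
  have hεpos : 0 < ε := by positivity
  have hball : ∀ w ∈ ball z ε, ε ≤ w.re := by
    intro w hw
    have := (Complex.abs_re_le_norm (w - z)).trans_lt (mem_ball_iff_norm.mp hw)
    have h2 : |w.re - z.re| < ε := by simpa [Complex.sub_re] using this
    have := abs_lt.mp h2
    linarith [this.1]
  have key := hasDerivAt_integral_of_dominated_loc_of_deriv_le (μ := volume.restrict (Ioi 0))
    (F := fun w (x : ℝ) => f x * (-(x:ℂ)) ^ ν * Complex.exp (-w * x))
    (F' := fun w (x : ℝ) => f x * (-(x:ℂ)) ^ (ν+1) * Complex.exp (-w * x))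
    (x₀ := z) (bound := fun x => M * (x ^ (ν+1) * Real.exp (-ε * x))) (ball_mem_nhds z hεpos)
    (Eventually.of_forall fun w => Measurable.aestronglyMeasurable (by fun_prop))
    (F_integrableOn f hfm M hfb ν hz)
    (Measurable.aestronglyMeasurable (by fun_prop)) ?_ ((kernel_integrable (ν+1) hεpos).const_mul M) ?_
  · exact key.2
  · filter_upwards [ae_restrict_mem measurableSet_Ioi] with x hx
    intro w hw
    rw [norm_integrand f (ν+1) w hx]
    have h1 : Real.exp (-w.re * x) ≤ Real.exp (-ε * x) := by
      apply Real.exp_le_exp.mpr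
      have := hball w hw
      nlinarith [(show (0:ℝ) < x from hx).le]
    have hx' := (show (0:ℝ) < x from hx).le
    calc ‖f x‖ * (x ^ (ν+1) * Real.exp (-w.re * x))
        ≤ M * (x ^ (ν+1) * Real.exp (-w.re * x)) := by
          apply mul_le_mul_of_nonneg_right (hfb x hx); positivity
      _ ≤ M * (x ^ (ν+1) * Real.exp (-ε * x)) := by
          apply mul_le_mul_of_nonneg_left _ hM
          exact mul_le_mul_of_nonneg_left h1 (by positivity)
  · filter_upwards [ae_restrict_mem measurableSet_Ioi] with x hx
    intro w hw
    have : HasDerivAt (fun w : ℂ => Complex.exp (-w * x)) (-(x:ℂ) * Complex.exp (-w * x)) w := by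
      have h := (Complex.hasDerivAt_exp (-w * x)).comp w
        ((hasDerivAt_id w).neg.mul_const (x:ℂ))
      simpa [mul_comm, Function.comp_def] using h
    have h2 := this.const_mul (f x * (-(x:ℂ)) ^ ν)
    convert h2 using 1
    · rfl
    ring

lemma F_iteratedDeriv (f : ℝ → ℂ) (hfm : Measurable f) (M : ℝ)
    (hfb : ∀ x : ℝ, 0 < x → ‖f x‖ ≤ M) (ν : ℕ) {z : ℂ} (hz : 0 < z.re) :
    iteratedDeriv ν (fun z : ℂ => ∫ x in Ioi (0:ℝ), f x * Complex.exp (-z * x)) z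
      = ∫ x in Ioi (0:ℝ), f x * (-(x:ℂ)) ^ ν * Complex.exp (-z * x) := by
  induction ν generalizing z with
  | zero => simp
  | succ ν ih =>
    rw [iteratedDeriv_succ]
    have hU : IsOpen {w : ℂ | 0 < w.re} := isOpen_lt continuous_const Complex.continuous_re
    have hev : iteratedDeriv ν (fun z : ℂ => ∫ x in Ioi (0:ℝ), f x * Complex.exp (-z * x))
        =ᶠ[nhds z] fun w => ∫ x in Ioi (0:ℝ), f x * (-(x:ℂ)) ^ ν * Complex.exp (-w * x) := by
      filter_upwards [hU.mem_nhds hz] with w hw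
      exact ih hw
    rw [hev.deriv_eq]
    exact (F_hasDerivAt f hfm M hfb ν hz).deriv

lemma g_total {ν : ℕ} (hν : 1 ≤ ν) {ξ : ℝ} (hξ : 0 < ξ) :
    ∫ x in Ioi (0:ℝ), ((ν/ξ)^(ν+1) / ν.factorial) * (x ^ ν * Real.exp (-(ν/ξ) * x)) = 1 := by
  have hs : 0 < (ν:ℝ)/ξ := by
    have : (0:ℝ) < ν := by exact_mod_cast hν
    positivity
  rw [integral_const_mul, kernel_moment ν hs]
  have h1 : ((ν:ℝ)/ξ)^(ν+1) ≠ 0 := by positivity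
  have h2 : (ν.factorial : ℝ) ≠ 0 := by exact_mod_cast ν.factorial_ne_zero
  field_simp

lemma g_second_moment {ν : ℕ} (hν : 1 ≤ ν) {ξ : ℝ} (hξ : 0 < ξ) :
    ∫ x in Ioi (0:ℝ), ((ν/ξ)^(ν+1) / ν.factorial) * ((x - ξ)^2 * (x ^ ν * Real.exp (-(ν/ξ) * x)))
      = (ν + 2) * ξ^2 / ν^2 := by
  have hν' : (0:ℝ) < ν := by exact_mod_cast hν
  have hs : 0 < (ν:ℝ)/ξ := by positivity
  set s := (ν:ℝ)/ξ with hsdef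
  have hexp : ∀ x : ℝ, (x - ξ)^2 * (x ^ ν * Real.exp (-s * x))
      = x ^ (ν+2) * Real.exp (-s*x) - (2*ξ) * (x^(ν+1) * Real.exp (-s*x))
        + ξ^2 * (x^ν * Real.exp (-s*x)) := by
    intro x; ring
  rw [integral_const_mul]
  rw [setIntegral_congr_fun measurableSet_Ioi (fun x _ => hexp x)]
  have hA : Integrable (fun x:ℝ => x ^ (ν+2) * Real.exp (-s*x) - 2*ξ*(x^(ν+1)*Real.exp (-s*x)))
      (volume.restrict (Ioi 0)) :=
    (kernel_integrable (ν+2) hs).sub ((kernel_integrable (ν+1) hs).const_mul (2*ξ))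
  have hC : Integrable (fun x:ℝ => ξ^2*(x^ν*Real.exp (-s*x))) (volume.restrict (Ioi 0)) :=
    (kernel_integrable ν hs).const_mul (ξ^2)
  rw [integral_add hA hC,
    integral_sub (kernel_integrable (ν+2) hs) ((kernel_integrable (ν+1) hs).const_mul (2*ξ)),
    integral_const_mul, integral_const_mul,
    kernel_moment (ν+2) hs, kernel_moment (ν+1) hs, kernel_moment ν hs]
  have hfac2 : ((ν+2).factorial : ℝ) = (ν+2) * ((ν+1) * ν.factorial) := by
    rw [Nat.factorial_succ, Nat.factorial_succ]; push_cast; ring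
  have hfac1 : ((ν+1).factorial : ℝ) = (ν+1) * ν.factorial := by
    rw [Nat.factorial_succ]; push_cast; ring
  have hsξ : s * ξ = ν := by rw [hsdef]; field_simp
  have hfacne : (ν.factorial : ℝ) ≠ 0 := by exact_mod_cast ν.factorial_ne_zero
  have hsne : s ≠ 0 := hs.ne'
  rw [hfac2, hfac1]
  rw [show ν+1+1+1 = ν+1+2 by ring, show ν+2+1 = ν+1+2 by ring, pow_add, pow_add, pow_add, pow_one]
  have hApos : (0:ℝ) < s^(ν+1) := pow_pos hs _
  rw [← hsξ]
  field_simp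
  ring

lemma kernel2_integrable (ν : ℕ) (ξ : ℝ) {s : ℝ} (hs : 0 < s) :
    IntegrableOn (fun x : ℝ => (x - ξ)^2 * (x ^ ν * Real.exp (-s * x))) (Ioi 0) := by
  have h : IntegrableOn (fun x : ℝ => x ^ (ν+2) * Real.exp (-s*x)
      - 2*ξ*(x^(ν+1)*Real.exp (-s*x)) + ξ^2*(x^ν*Real.exp (-s*x))) (Ioi 0) :=
    (((kernel_integrable (ν+2) hs).sub ((kernel_integrable (ν+1) hs).const_mul (2*ξ))).add
      ((kernel_integrable ν hs).const_mul (ξ^2)))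
  exact h.congr_fun (fun x _ => by ring) measurableSet_Ioi

lemma main_bound (f : ℝ → ℂ) (hfm : Measurable f) (M : ℝ)
    (hfb : ∀ x : ℝ, 0 < x → ‖f x‖ ≤ M)
    (ξ : ℝ) (hξ : 0 < ξ) (δ ε' : ℝ) (hδ : 0 < δ) (hε' : 0 ≤ ε')
    (hnear : ∀ x : ℝ, |x - ξ| < δ → ‖f x - f ξ‖ ≤ ε')
    (ν : ℕ) (hν : 1 ≤ ν) :
    ‖((-1 : ℂ) ^ ν / (ν.factorial : ℂ)) * ((((ν : ℝ) / ξ : ℝ) : ℂ)) ^ (ν + 1) *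
          iteratedDeriv ν
            (fun z : ℂ => ∫ x in Ioi (0 : ℝ), f x * Complex.exp (-z * (x : ℂ)))
            (((ν : ℝ) / ξ : ℝ) : ℂ) - f ξ‖
      ≤ ε' + ((M + ‖f ξ‖)/δ^2) * ((ν + 2) * ξ^2 / ν^2) := by
  have hν' : (0:ℝ) < ν := by exact_mod_cast hν
  have hs : 0 < (ν:ℝ)/ξ := by positivity
  have hsz : 0 < (((((ν:ℝ))/ξ : ℝ)) : ℂ).re := by simpa using hs
  have hM : 0 ≤ M := (norm_nonneg _).trans (hfb 1 one_pos)
  set c : ℝ := ((ν:ℝ)/ξ)^(ν+1) / (ν.factorial:ℝ) with hc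
  have hcpos : 0 < c := by rw [hc]; positivity
  set g : ℝ → ℝ := fun x => c * (x ^ ν * Real.exp (-((ν:ℝ)/ξ) * x)) with hg
  -- step 1 : rewrite the expression as ∫ (g x) * f x
  rw [F_iteratedDeriv f hfm M hfb ν hsz]
  rw [show ((-1 : ℂ) ^ ν / (ν.factorial : ℂ)) * ((((ν : ℝ) / ξ : ℝ) : ℂ)) ^ (ν + 1) *
        ∫ x in Ioi (0:ℝ), f x * (-(x:ℂ)) ^ ν * Complex.exp (-(((ν:ℝ)/ξ : ℝ):ℂ) * x)
      = ∫ x in Ioi (0:ℝ), ((-1 : ℂ) ^ ν / (ν.factorial : ℂ) * ((((ν : ℝ) / ξ : ℝ) : ℂ)) ^ (ν + 1))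
          * (f x * (-(x:ℂ)) ^ ν * Complex.exp (-(((ν:ℝ)/ξ : ℝ):ℂ) * x)) from
    (integral_const_mul _ _).symm]
  have hpt : ∀ x ∈ Ioi (0:ℝ),
      ((-1 : ℂ) ^ ν / (ν.factorial : ℂ) * ((((ν : ℝ) / ξ : ℝ) : ℂ)) ^ (ν + 1))
          * (f x * (-(x:ℂ)) ^ ν * Complex.exp (-(((ν:ℝ)/ξ : ℝ):ℂ) * x))
        = ((g x : ℝ) : ℂ) * f x := by
    intro x _
    have hexp : Complex.exp (-(((ν:ℝ)/ξ : ℝ):ℂ) * x)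
        = ((Real.exp (-((ν:ℝ)/ξ) * x) : ℝ) : ℂ) := by
      rw [Complex.ofReal_exp]; norm_cast
    rw [hexp]
    simp only [hg, hc]
    obtain ⟨E, hE⟩ : ∃ E : ℝ, E = Real.exp (-((ν:ℝ)/ξ) * x) := ⟨_, rfl⟩
    rw [← hE]
    have hx : (-(x:ℂ))^ν = (-1:ℂ)^ν * (x:ℂ)^ν := by rw [← mul_pow]; ring_nf
    rw [hx]
    have hsign : ((-1:ℂ))^ν * ((-1:ℂ))^ν = 1 := by
      rw [← mul_pow]; norm_num
    push_cast
    linear_combination (((ν:ℂ)/(ξ:ℂ)))^(ν+1) / ((ν.factorial : ℂ)) * f x * ((x:ℂ))^ν *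
      ((E : ℂ)) * hsign
  rw [setIntegral_congr_fun measurableSet_Ioi hpt]
  -- step 2 : total mass one
  have hgc_int : IntegrableOn (fun x => ((g x : ℝ) : ℂ)) (Ioi 0) :=
    (((kernel_integrable ν hs).const_mul c)).ofReal
  have hgf_int : IntegrableOn (fun x => ((g x : ℝ) : ℂ) * f x) (Ioi 0) := by
    refine Integrable.mono' (((kernel_integrable ν hs).const_mul c).const_mul M) ?_ ?_
    · exact Measurable.aestronglyMeasurable (by fun_prop)
    · filter_upwards [ae_restrict_mem measurableSet_Ioi] with x hx
      have hx' : (0:ℝ) ≤ x := le_of_lt hx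
      have hgnn : 0 ≤ g x := by simp only [hg]; positivity
      rw [norm_mul, Complex.norm_real, Real.norm_eq_abs, abs_of_nonneg hgnn]
      calc g x * ‖f x‖ ≤ g x * M := mul_le_mul_of_nonneg_left (hfb x hx) hgnn
        _ = M * (c * (x ^ ν * Real.exp (-((ν:ℝ)/ξ) * x))) := by simp only [hg]; ring
  have hg_one : (∫ x in Ioi (0:ℝ), ((g x : ℝ) : ℂ)) = 1 := by
    have hr : (∫ x in Ioi (0:ℝ), g x) = 1 := by simp only [hg, hc]; exact g_total hν hξ
    calc (∫ x in Ioi (0:ℝ), ((g x : ℝ) : ℂ))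
        = ((∫ x in Ioi (0:ℝ), g x : ℝ) : ℂ) := integral_ofReal
      _ = 1 := by rw [hr]; norm_num
  have hsub : (∫ x in Ioi (0:ℝ), ((g x : ℝ) : ℂ) * f x) - f ξ
      = ∫ x in Ioi (0:ℝ), ((g x : ℝ) : ℂ) * (f x - f ξ) := by
    rw [show (fun x => ((g x : ℝ) : ℂ) * (f x - f ξ))
        = fun x => ((g x : ℝ) : ℂ) * f x - ((g x : ℝ) : ℂ) * f ξ from funext (fun x => by ring)]
    rw [integral_sub hgf_int (hgc_int.mul_const (f ξ)), integral_mul_const, hg_one, one_mul]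
  rw [hsub]
  -- step 3 : bound the integral
  set C : ℝ := M + ‖f ξ‖ with hC
  have hCnn : 0 ≤ C := by rw [hC]; positivity
  set bound : ℝ → ℝ := fun x => ε' * (c * (x ^ ν * Real.exp (-((ν:ℝ)/ξ) * x)))
      + (C/δ^2) * (c * ((x - ξ)^2 * (x ^ ν * Real.exp (-((ν:ℝ)/ξ) * x)))) with hbd
  have hbd_int : IntegrableOn bound (Ioi 0) :=
    (((kernel_integrable ν hs).const_mul c).const_mul ε').add
      (((kernel2_integrable ν ξ hs).const_mul c).const_mul (C/δ^2))
  have hle : ‖∫ x in Ioi (0:ℝ), ((g x : ℝ) : ℂ) * (f x - f ξ)‖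
      ≤ ∫ x in Ioi (0:ℝ), bound x := by
    refine norm_integral_le_of_norm_le hbd_int ?_
    filter_upwards [ae_restrict_mem measurableSet_Ioi] with x hx
    have hxpos : (0:ℝ) < x := hx
    have hx' : (0:ℝ) ≤ x := hxpos.le
    have hgnn : 0 ≤ g x := by simp only [hg]; positivity
    rw [norm_mul, Complex.norm_real, Real.norm_eq_abs, abs_of_nonneg hgnn]
    have hkernnn : 0 ≤ c * (x ^ ν * Real.exp (-((ν:ℝ)/ξ) * x)) := by positivity
    by_cases hnear' : |x - ξ| < δ
    · have h1 : g x * ‖f x - f ξ‖ ≤ g x * ε' := mul_le_mul_of_nonneg_left (hnear x hnear') hgnn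
      have h2 : 0 ≤ (C/δ^2) * (c * ((x - ξ)^2 * (x ^ ν * Real.exp (-((ν:ℝ)/ξ) * x)))) := by
        positivity
      simp only [hbd, hg] at *
      nlinarith [h1]
    · push_neg at hnear'
      have hΔ : ‖f x - f ξ‖ ≤ C := by
        calc ‖f x - f ξ‖ ≤ ‖f x‖ + ‖f ξ‖ := norm_sub_le _ _
          _ ≤ M + ‖f ξ‖ := add_le_add_left (hfb x hxpos) _
      have hδ2 : δ^2 ≤ (x - ξ)^2 := by
        nlinarith [hnear', hδ.le, abs_nonneg (x - ξ), sq_abs (x - ξ)]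
      have hgC : g x * ‖f x - f ξ‖ ≤ g x * C := mul_le_mul_of_nonneg_left hΔ hgnn
      have h3 : g x * C ≤ (C/δ^2) * (c * ((x - ξ)^2 * (x ^ ν * Real.exp (-((ν:ℝ)/ξ) * x)))) := by
        have hδ2pos : (0:ℝ) < δ^2 := by positivity
        have hratio : (1:ℝ) ≤ (x - ξ)^2 / δ^2 := (one_le_div hδ2pos).mpr hδ2
        have heq : (C/δ^2) * (c * ((x - ξ)^2 * (x ^ ν * Real.exp (-((ν:ℝ)/ξ) * x))))
            = (C * (c * (x ^ ν * Real.exp (-((ν:ℝ)/ξ) * x)))) * ((x - ξ)^2 / δ^2) := by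
          field_simp
        have heq2 : g x * C = (C * (c * (x ^ ν * Real.exp (-((ν:ℝ)/ξ) * x)))) * 1 := by
          simp only [hg]; ring
        rw [heq, heq2]
        exact mul_le_mul_of_nonneg_left hratio (by positivity)
      have h4 : 0 ≤ ε' * (c * (x ^ ν * Real.exp (-((ν:ℝ)/ξ) * x))) := by positivity
      simp only [hbd]
      nlinarith [hgC.trans h3]
  refine hle.trans ?_
  have i1 : (∫ x in Ioi (0:ℝ), ε' * (c * (x ^ ν * Real.exp (-((ν:ℝ)/ξ) * x)))) = ε' := by
    rw [integral_const_mul]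
    simp only [hc]
    rw [g_total hν hξ, mul_one]
  have i2 : (∫ x in Ioi (0:ℝ), (C/δ^2) * (c * ((x - ξ)^2 * (x ^ ν * Real.exp (-((ν:ℝ)/ξ) * x)))))
      = (C/δ^2) * ((ν + 2) * ξ^2 / ν^2) := by
    rw [integral_const_mul]
    simp only [hc]
    rw [g_second_moment hν hξ]
  simp only [hbd]
  rw [integral_add (((kernel_integrable ν hs).const_mul c).const_mul ε')
      (((kernel2_integrable ν ξ hs).const_mul c).const_mul (C/δ^2)), i1, i2, hC]
/-- Classical Post–Widder inversion formula: for bounded measurable `f : (0,∞) → ℂ`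
continuous at `ξ > 0`, with Laplace transform `Lf(z) = ∫₀^∞ f(x) e^{−zx} dx`,
`f(ξ) = lim_ν ((−1)^ν/ν!) (ν/ξ)^{ν+1} (Lf)^{(ν)}(ν/ξ)`. -/

theorem post_widder (f : ℝ → ℂ) (hfm : Measurable f) (M : ℝ)
    (hfb : ∀ x : ℝ, 0 < x → ‖f x‖ ≤ M)
    (ξ : ℝ) (hξ : 0 < ξ) (hcont : ContinuousAt f ξ) :
    Filter.Tendsto
      (fun ν : ℕ =>
        ((-1 : ℂ) ^ ν / (ν.factorial : ℂ)) * ((((ν : ℝ) / ξ : ℝ) : ℂ)) ^ (ν + 1) *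
          iteratedDeriv ν
            (fun z : ℂ => ∫ x in Set.Ioi (0 : ℝ), f x * Complex.exp (-z * (x : ℂ)))
            (((ν : ℝ) / ξ : ℝ) : ℂ))
      Filter.atTop (nhds (f ξ)) := by
  rw [Metric.tendsto_atTop]
  intro ε hε
  obtain ⟨δ, hδ, hnear⟩ : ∃ δ > 0, ∀ x : ℝ, |x - ξ| < δ → ‖f x - f ξ‖ ≤ ε/4 := by
    obtain ⟨δ, hδ, h⟩ := Metric.continuousAt_iff.mp hcont (ε/4) (by positivity)
    exact ⟨δ, hδ, fun x hx => by
      have := h (show dist x ξ < δ by rwa [Real.dist_eq])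
      rw [dist_eq_norm] at this
      exact this.le⟩
  set C : ℝ := (M + ‖f ξ‖)/δ^2 with hC
  have ht0 : Tendsto (fun ν : ℕ => (1:ℝ)/ν) atTop (nhds 0) :=
    tendsto_one_div_atTop_nhds_zero_nat
  have htend : Tendsto (fun ν : ℕ => C * (((ν:ℝ) + 2) * ξ^2 / ν^2)) atTop (nhds 0) := by
    have h1 : Tendsto (fun ν : ℕ => ξ^2*((1:ℝ)/ν) + 2*ξ^2*(((1:ℝ)/ν)*((1:ℝ)/ν)))
        atTop (nhds (ξ^2*0 + 2*ξ^2*(0*0))) :=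
      ((ht0.const_mul _).add ((ht0.mul ht0).const_mul _))
    rw [show ξ^2*(0:ℝ) + 2*ξ^2*(0*0) = 0 by ring] at h1
    have h2 : Tendsto (fun ν : ℕ => (((ν:ℝ) + 2) * ξ^2 / ν^2)) atTop (nhds 0) := by
      refine h1.congr' ?_
      filter_upwards [eventually_ge_atTop 1] with ν hν
      have hν' : (0:ℝ) < ν := by exact_mod_cast hν
      field_simp
    have := h2.const_mul C
    simpa using this
  have hev := (htend.eventually_lt_const (show (0:ℝ) < ε/2 by positivity)).and
    (eventually_ge_atTop 1)
  obtain ⟨N, hN⟩ := eventually_atTop.mp hev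
  refine ⟨N, fun ν hν => ?_⟩
  obtain ⟨hsmall, hν1⟩ := hN ν hν
  rw [dist_eq_norm]
  have hb := main_bound f hfm M hfb ξ hξ δ (ε/4) hδ (by positivity) hnear ν hν1
  rw [← hC] at hb
  calc ‖_ - f ξ‖ ≤ ε/4 + C * (((ν:ℝ) + 2) * ξ^2 / ν^2) := hb
    _ < ε/4 + ε/2 := by linarith
    _ < ε := by linarith
end

section
/- Let η ∈ ℕ₀ⁿ be a composition and let j be minimal with (η₊)_j = η₁, so j − 1 = #{ℓ > 1 : η₁ < η_ℓ}. Then the sorted version of Φη = (η₂,…,ηₙ,η₁+1) equals η₊ with 1 added at position j: (Φη)₊ = η₊ + e_j, where e_j is the j-th standard basis vector. In particular (Φη)₊ is again a partition. -/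
/-- The raising operator on compositions `η ∈ ℕ₀ⁿ`: `Φη = (η₂, …, ηₙ, η₁ + 1)`. -/
def raiseCompN (n : ℕ) (η : Fin (n + 1) → ℕ) : Fin (n + 1) → ℕ :=
  fun i => if i = Fin.last n then η 0 + 1 else η (i + 1)

/-- Let `η` be a composition, `lamPlus = η₊` its decreasing rearrangement, and `j`
minimal with `(η₊)ⱼ = η₁`. Then the decreasing rearrangement of `Φη` is `η₊ + eⱼ`:
the tuple `η₊ + eⱼ` is again weakly decreasing (a partition), and it is a
rearrangement of `Φη`. -/
theorem raising_operator_sorted (n : ℕ) (η lamPlus : Fin (n + 1) → ℕ)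
    (hdec : ∀ i i' : Fin (n + 1), i ≤ i' → lamPlus i' ≤ lamPlus i)
    (σ : Equiv.Perm (Fin (n + 1))) (hperm : ∀ i, lamPlus i = η (σ i))
    (j : Fin (n + 1)) (hj : lamPlus j = η 0)
    (hjmin : ∀ i : Fin (n + 1), i < j → lamPlus i ≠ η 0) :
    (∀ i i' : Fin (n + 1), i ≤ i' →
        lamPlus i' + (if i' = j then 1 else 0) ≤ lamPlus i + (if i = j then 1 else 0)) ∧
    ∃ τ : Equiv.Perm (Fin (n + 1)), ∀ i : Fin (n + 1),
        lamPlus i + (if i = j then 1 else 0) = raiseCompN n η (τ i) := by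
  constructor
  · intro i i' hle
    have h1 := hdec i i' hle
    by_cases hi' : i' = j
    · by_cases hi : i = j
      · simp [hi, hi']
      · have hlt : i < j := by
          refine lt_of_le_of_ne ?_ hi
          rw [← hi']; exact hle
        have h2 := hjmin i hlt
        have h3 : lamPlus i' = η 0 := hi' ▸ hj
        simp only [if_pos hi', if_neg hi]
        omega
    · by_cases hi : i = j
      · simp only [if_neg hi', if_pos hi]; omega
      · simp only [if_neg hi', if_neg hi]; omega
  · set i₀ := σ.symm 0 with hi₀def
    have hσi₀ : σ i₀ = 0 := σ.apply_symm_apply 0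
    set σ' : Equiv.Perm (Fin (n + 1)) := (Equiv.swap j i₀).trans σ with hσ'def
    have hσ'j : σ' j = 0 := by simp [hσ'def, Equiv.swap_apply_left, hσi₀]
    have hσ' : ∀ i, lamPlus i = η (σ' i) := by
      intro i
      by_cases h1 : i = j
      · subst h1; rw [hσ'j, hj]
      by_cases h2 : i = i₀
      · subst h2
        simp only [hσ'def, Equiv.trans_apply, Equiv.swap_apply_right]
        rw [← hperm j, hj, hperm i₀, hσi₀]
      · simp [hσ'def, Equiv.swap_apply_of_ne_of_ne h1 h2, hperm]
    have hlast : (0 : Fin (n + 1)) - 1 = Fin.last n := by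
      rw [sub_eq_iff_eq_add, Fin.last_add_one]
    refine ⟨σ'.trans (Equiv.subRight 1), ?_⟩
    intro i
    by_cases h1 : i = j
    · subst h1
      simp only [Equiv.trans_apply, Equiv.subRight_apply, hσ'j, hlast, raiseCompN,
        if_pos rfl, if_true, hj]
    · have hne : σ' i ≠ 0 := fun h => h1 (σ'.injective (h.trans hσ'j.symm))
      have hτ : σ' i - 1 ≠ Fin.last n := by
        intro h
        apply hne
        have h' : σ' i - 1 + 1 = Fin.last n + 1 := by rw [h]
        rwa [sub_add_cancel, Fin.last_add_one] at h'
      simp only [Equiv.trans_apply, Equiv.subRight_apply, raiseCompN, if_neg hτ,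
        sub_add_cancel, if_neg h1, add_zero, hσ' i]
end
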